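/- Let T be a finite set of n points in ℝ^d, let α ∈ (0,1], and let S_1,…,S_k ⊆ T be pairwise disjoint subsets satisfying the no-large-sub-cluster condition with parameter α: for every i and every subset S' ⊆ S_i with |S'| ≥ 0.8·α·n, it holds that σ_{S'} ≥ 0.1·σ_{S_i}. Suppose B_1,…,B_m ⊆ T are pairwise disjoint sets with |B_j| ≥ 0.92·α·n for all j, that for each j ∈ [m] there is an index i(j) ∈ [k] with |B_j ∩ S_{i(j)}| ≥ 0.96·|B_j|, and that ‖μ_{B_j} − μ_{B_{j'}}‖₂ > 13·(σ_{B_j} + σ_{B_{j'}})/√α for all j ≠ j'. Then the map j ↦ i(j) is injective; i.e., at most one of the sets B_1,…,B_m corresponds to each cluster S_i. -/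

import Mathlib

/-!
Suppose `g j = g j' = i` and put `A = B j ∩ S i`, `A' = B j' ∩ S i`. Everything rests on the
parallel axis theorem: for a subset `A ⊆ S` and a direction `v`, the second moment of `A` about
`μ_S` is its own variance plus `|A| ⟪μ_A - μ_S, v⟫²`, and it is at most `|S| σ_S² ‖v‖²`. Hence a
subset carrying a fixed fraction of the mass of `S` has variance and mean displacement controlled
by `σ_S`, and two disjoint subsets of `S` of size `≥ c |S|` have means at distance
`O(σ_S / √c)`. Since `A` makes up 96% of `B j`, its mean lies within `O(σ_{B j})` of `μ_{B j}`,
and the no-large-sub-cluster condition, applied to `A`, gives `σ_{S i} ≤ 10 σ_A = O(σ_{B j})`;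
likewise for `j'`. As `|A|, |A'| ≥ 0.88 α |S i|`, the three steps
`μ_{B j} → μ_A → μ_{A'} → μ_{B j'}` add up to less than the separation `13 (σ_{B j} + σ_{B j'}) / √α`.
-/

open scoped BigOperators

noncomputable instance euclDecEq (d : ℕ) : DecidableEq (EuclideanSpace ℝ (Fin d)) :=
  Classical.decEq _

/-- The operator (spectral) norm of a `d × d` real matrix, viewed as a linear map on
Euclidean space. -/
noncomputable def opNorm {d : ℕ} (M : Matrix (Fin d) (Fin d) ℝ) : ℝ :=
  ‖LinearMap.toContinuousLinearMap (Matrix.toEuclideanLin M)‖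

/-- The outer product `u uᵀ` as a matrix. -/
noncomputable def outerMat {d : ℕ} (u : EuclideanSpace ℝ (Fin d)) : Matrix (Fin d) (Fin d) ℝ :=
  Matrix.of fun a b => u a * u b

/-- The mean of a finite set of points in `ℝ^d`. -/
noncomputable def fmean {d : ℕ} (S : Finset (EuclideanSpace ℝ (Fin d))) :
    EuclideanSpace ℝ (Fin d) :=
  (S.card : ℝ)⁻¹ • ∑ x ∈ S, x

/-- The covariance matrix of a finite set of points in `ℝ^d`. -/
noncomputable def fcov {d : ℕ} (S : Finset (EuclideanSpace ℝ (Fin d))) :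
    Matrix (Fin d) (Fin d) ℝ :=
  (S.card : ℝ)⁻¹ • ∑ x ∈ S, outerMat (x - fmean S)

/-- `σ_S`, the square root of the largest eigenvalue of the covariance matrix of `S`. -/
noncomputable def fstdev {d : ℕ} (S : Finset (EuclideanSpace ℝ (Fin d))) : ℝ :=
  Real.sqrt (opNorm (fcov S))


open scoped RealInnerProductSpace
open Finset

section

variable {d : ℕ}

lemma toEuclideanLin_outerMat_apply (u v : EuclideanSpace ℝ (Fin d)) :
    Matrix.toEuclideanLin (outerMat u) v = ⟪u, v⟫ • u := by
  ext a
  simp [Matrix.toLpLin_apply, outerMat, Matrix.mulVec, dotProduct, PiLp.inner_apply,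
    Finset.mul_sum, mul_comm, mul_assoc]

noncomputable def covOp (S : Finset (EuclideanSpace ℝ (Fin d))) :
    EuclideanSpace ℝ (Fin d) →L[ℝ] EuclideanSpace ℝ (Fin d) :=
  LinearMap.toContinuousLinearMap (Matrix.toEuclideanLin (fcov S))

lemma inner_covOp_apply (S : Finset (EuclideanSpace ℝ (Fin d)))
    (v w : EuclideanSpace ℝ (Fin d)) :
    ⟪covOp S v, w⟫ = (#S : ℝ)⁻¹ * ∑ x ∈ S, ⟪x - fmean S, v⟫ * ⟪x - fmean S, w⟫ := by
  change ⟪Matrix.toEuclideanLin (fcov S) v, w⟫ = _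
  simp only [fcov, map_smul, map_sum, LinearMap.smul_apply, LinearMap.sum_apply,
    real_inner_smul_left, sum_inner, toEuclideanLin_outerMat_apply]

lemma fstdev_nonneg (S : Finset (EuclideanSpace ℝ (Fin d))) : 0 ≤ fstdev S :=
  Real.sqrt_nonneg _

lemma fstdev_sq (S : Finset (EuclideanSpace ℝ (Fin d))) : fstdev S ^ 2 = ‖covOp S‖ :=
  Real.sq_sqrt (norm_nonneg _)

lemma fstdev_empty : fstdev (∅ : Finset (EuclideanSpace ℝ (Fin d))) = 0 := by
  simp [fstdev, fcov, opNorm]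

lemma sum_inner_sub_fmean_sq_eq (S : Finset (EuclideanSpace ℝ (Fin d)))
    (v : EuclideanSpace ℝ (Fin d)) :
    ∑ x ∈ S, ⟪x - fmean S, v⟫ ^ 2 = #S * ⟪covOp S v, v⟫ := by
  rcases S.eq_empty_or_nonempty with rfl | hS
  · simp
  rw [inner_covOp_apply, mul_inv_cancel_left₀ (by positivity)]
  simp only [sq]

lemma sum_inner_sub_fmean_sq_le (S : Finset (EuclideanSpace ℝ (Fin d)))
    (v : EuclideanSpace ℝ (Fin d)) :
    ∑ x ∈ S, ⟪x - fmean S, v⟫ ^ 2 ≤ #S * fstdev S ^ 2 * ‖v‖ ^ 2 := by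
  have hle : ⟪covOp S v, v⟫ ≤ fstdev S ^ 2 * ‖v‖ ^ 2 := calc
    ⟪covOp S v, v⟫ ≤ ‖covOp S v‖ * ‖v‖ := real_inner_le_norm _ _
    _ ≤ ‖covOp S‖ * ‖v‖ * ‖v‖ := by gcongr; exact (covOp S).le_opNorm v
    _ = fstdev S ^ 2 * ‖v‖ ^ 2 := by rw [fstdev_sq]; ring
  rw [sum_inner_sub_fmean_sq_eq, mul_assoc]
  gcongr

lemma fstdev_sq_le_of_forall (S : Finset (EuclideanSpace ℝ (Fin d))) {C : ℝ} (hC : 0 ≤ C)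
    (h : ∀ v, ∑ x ∈ S, ⟪x - fmean S, v⟫ ^ 2 ≤ #S * C * ‖v‖ ^ 2) :
    fstdev S ^ 2 ≤ C := by
  rcases S.eq_empty_or_nonempty with rfl | hS
  · simpa [fstdev_empty] using hC
  have hsymm : (covOp S : EuclideanSpace ℝ (Fin d) →ₗ[ℝ] _).IsSymmetric := fun v w => by
    rw [ContinuousLinearMap.coe_coe, ← real_inner_comm v, inner_covOp_apply, inner_covOp_apply]
    simp only [mul_comm]
  rw [fstdev_sq, (covOp S).norm_eq_iSup_rayleighQuotient hsymm]
  refine ciSup_le fun v => ?_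
  have hcard : (0 : ℝ) < #S := by positivity
  have hle : ⟪covOp S v, v⟫ ≤ C * ‖v‖ ^ 2 := by
    refine le_of_mul_le_mul_left ?_ hcard
    rw [← sum_inner_sub_fmean_sq_eq, ← mul_assoc]
    exact h v
  have hnonneg : 0 ≤ ⟪covOp S v, v⟫ := by
    refine nonneg_of_mul_nonneg_right ?_ hcard
    rw [← sum_inner_sub_fmean_sq_eq]
    positivity
  rw [ContinuousLinearMap.rayleighQuotient, ContinuousLinearMap.reApplyInnerSelf_apply,
    RCLike.re_to_real, abs_of_nonneg (div_nonneg hnonneg (sq_nonneg _))]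
  exact div_le_of_le_mul₀ (sq_nonneg _) hC hle

lemma sum_inner_sub_fmean (A : Finset (EuclideanSpace ℝ (Fin d)))
    (v : EuclideanSpace ℝ (Fin d)) : ∑ x ∈ A, ⟪x - fmean A, v⟫ = 0 := by
  rcases A.eq_empty_or_nonempty with rfl | hA
  · simp
  have hmean : ⟪fmean A, v⟫ = (#A : ℝ)⁻¹ * ∑ x ∈ A, ⟪x, v⟫ := by
    rw [fmean, real_inner_smul_left, sum_inner]
  rw [sum_congr rfl fun x _ => inner_sub_left x (fmean A) v, sum_sub_distrib, sum_const,
    nsmul_eq_mul, hmean, mul_inv_cancel_left₀ (by positivity), sub_self]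

/-- The parallel axis theorem, in every direction `v`. -/
lemma sum_inner_sub_sq_eq (A : Finset (EuclideanSpace ℝ (Fin d)))
    (z v : EuclideanSpace ℝ (Fin d)) :
    ∑ x ∈ A, ⟪x - z, v⟫ ^ 2 = ∑ x ∈ A, ⟪x - fmean A, v⟫ ^ 2 + #A * ⟪fmean A - z, v⟫ ^ 2 := by
  have hsplit : ∀ x, ⟪x - z, v⟫ ^ 2 = ⟪x - fmean A, v⟫ ^ 2 +
      2 * ⟪fmean A - z, v⟫ * ⟪x - fmean A, v⟫ + ⟪fmean A - z, v⟫ ^ 2 := fun x => by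
    rw [← sub_add_sub_cancel x (fmean A) z, inner_add_left]
    ring
  rw [sum_congr rfl fun x _ => hsplit x, sum_add_distrib, sum_add_distrib, ← mul_sum,
    sum_inner_sub_fmean, sum_const, nsmul_eq_mul]
  ring

lemma sum_inner_sub_fmean_sq_add_le_of_subset {A B : Finset (EuclideanSpace ℝ (Fin d))}
    (hAB : A ⊆ B) (v : EuclideanSpace ℝ (Fin d)) :
    ∑ x ∈ A, ⟪x - fmean A, v⟫ ^ 2 + #A * ⟪fmean A - fmean B, v⟫ ^ 2 ≤
      #B * fstdev B ^ 2 * ‖v‖ ^ 2 := calc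
  _ = ∑ x ∈ A, ⟪x - fmean B, v⟫ ^ 2 := (sum_inner_sub_sq_eq A _ v).symm
  _ ≤ ∑ x ∈ B, ⟪x - fmean B, v⟫ ^ 2 := sum_le_sum_of_subset_of_nonneg hAB fun _ _ _ => sq_nonneg _
  _ ≤ _ := sum_inner_sub_fmean_sq_le B v

lemma card_mul_fstdev_sq_le_of_subset {A B : Finset (EuclideanSpace ℝ (Fin d))} (hAB : A ⊆ B) :
    #A * fstdev A ^ 2 ≤ #B * fstdev B ^ 2 := by
  rcases A.eq_empty_or_nonempty with rfl | hA
  · simp only [card_empty, CharP.cast_eq_zero, zero_mul]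
    positivity
  have hcard : (0 : ℝ) < #A := by positivity
  rw [← le_div_iff₀' hcard]
  refine fstdev_sq_le_of_forall A (by positivity) fun v => ?_
  rw [mul_div_cancel₀ _ hcard.ne']
  have := sum_inner_sub_fmean_sq_add_le_of_subset hAB v
  have : 0 ≤ (#A : ℝ) * ⟪fmean A - fmean B, v⟫ ^ 2 := by positivity
  linarith

lemma card_mul_norm_fmean_sub_sq_le_of_subset {A B : Finset (EuclideanSpace ℝ (Fin d))}
    (hAB : A ⊆ B) : #A * ‖fmean A - fmean B‖ ^ 2 ≤ #B * fstdev B ^ 2 := by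
  set u := fmean A - fmean B
  have h := sum_inner_sub_fmean_sq_add_le_of_subset hAB u
  rw [real_inner_self_eq_norm_sq] at h
  have hsum : 0 ≤ ∑ x ∈ A, ⟪x - fmean A, u⟫ ^ 2 := by positivity
  have hweighted : #A * ‖u‖ ^ 2 * ‖u‖ ^ 2 ≤ #B * fstdev B ^ 2 * ‖u‖ ^ 2 := by linarith
  rcases (sq_nonneg ‖u‖).eq_or_lt with hu | hu
  · rw [← hu, mul_zero]
    positivity
  · exact le_of_mul_le_mul_right hweighted hu

lemma card_mul_card_mul_norm_fmean_sub_sq_le {A A' S : Finset (EuclideanSpace ℝ (Fin d))}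
    (hA : A ⊆ S) (hA' : A' ⊆ S) (hdisj : Disjoint A A') :
    #A * #A' * ‖fmean A - fmean A'‖ ^ 2 ≤ (#A + #A') * #S * fstdev S ^ 2 := by
  set v := fmean A - fmean A'
  set p := ⟪fmean A - fmean S, v⟫
  set q := ⟪fmean A' - fmean S, v⟫
  have hpq : p - q = ‖v‖ ^ 2 := by
    rw [← inner_sub_left, sub_sub_sub_cancel_right, real_inner_self_eq_norm_sq]
  have hspread : (#A : ℝ) * p ^ 2 + #A' * q ^ 2 ≤ #S * fstdev S ^ 2 * ‖v‖ ^ 2 := by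
    have hsplitA := sum_inner_sub_sq_eq A (fmean S) v
    have hsplitA' := sum_inner_sub_sq_eq A' (fmean S) v
    have hunion : ∑ x ∈ A ∪ A', ⟪x - fmean S, v⟫ ^ 2 ≤ ∑ x ∈ S, ⟪x - fmean S, v⟫ ^ 2 :=
      sum_le_sum_of_subset_of_nonneg (union_subset hA hA') fun _ _ _ => sq_nonneg _
    rw [sum_union hdisj] at hunion
    have := sum_inner_sub_fmean_sq_le S v
    have : 0 ≤ ∑ x ∈ A, ⟪x - fmean A, v⟫ ^ 2 := by positivity
    have : 0 ≤ ∑ x ∈ A', ⟪x - fmean A', v⟫ ^ 2 := by positivity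
    linarith
  have hweighted : (#A : ℝ) * #A' * ‖v‖ ^ 2 * ‖v‖ ^ 2 ≤
      (#A + #A') * #S * fstdev S ^ 2 * ‖v‖ ^ 2 := calc
    _ = (#A : ℝ) * #A' * (p - q) ^ 2 := by rw [hpq]; ring
    _ ≤ (#A + #A') * (#A * p ^ 2 + #A' * q ^ 2) := by
      linear_combination sq_nonneg ((#A : ℝ) * p + #A' * q)
    _ ≤ (#A + #A') * (#S * fstdev S ^ 2 * ‖v‖ ^ 2) := by gcongr
    _ = _ := by ring
  rcases (sq_nonneg ‖v‖).eq_or_lt with hv | hv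
  · rw [← hv, mul_zero]
    positivity
  · exact le_of_mul_le_mul_right hweighted hv

lemma mul_fstdev_sq_le_of_subset {A B : Finset (EuclideanSpace ℝ (Fin d))} (hAB : A ⊆ B)
    {c : ℝ} (hcard : c * #B ≤ #A) : c * fstdev A ^ 2 ≤ fstdev B ^ 2 := by
  rcases B.eq_empty_or_nonempty with rfl | hB
  · simp [subset_empty.1 hAB, fstdev_empty]
  refine le_of_mul_le_mul_left ?_ (by positivity : (0 : ℝ) < #B)
  calc #B * (c * fstdev A ^ 2) = c * #B * fstdev A ^ 2 := by ring
    _ ≤ #A * fstdev A ^ 2 := by gcongr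
    _ ≤ #B * fstdev B ^ 2 := card_mul_fstdev_sq_le_of_subset hAB

lemma mul_norm_fmean_sub_sq_le_of_subset {A B : Finset (EuclideanSpace ℝ (Fin d))}
    (hAB : A ⊆ B) {c : ℝ} (hcard : c * #B ≤ #A) :
    c * ‖fmean A - fmean B‖ ^ 2 ≤ fstdev B ^ 2 := by
  rcases B.eq_empty_or_nonempty with rfl | hB
  · simp [subset_empty.1 hAB, sq_nonneg]
  refine le_of_mul_le_mul_left ?_ (by positivity : (0 : ℝ) < #B)
  calc #B * (c * ‖fmean A - fmean B‖ ^ 2) = c * #B * ‖fmean A - fmean B‖ ^ 2 := by ring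
    _ ≤ #A * ‖fmean A - fmean B‖ ^ 2 := by gcongr
    _ ≤ #B * fstdev B ^ 2 := card_mul_norm_fmean_sub_sq_le_of_subset hAB

lemma mul_norm_fmean_sub_sq_le_of_disjoint {A A' S : Finset (EuclideanSpace ℝ (Fin d))}
    (hA : A ⊆ S) (hA' : A' ⊆ S) (hdisj : Disjoint A A') {c : ℝ} (hc : 0 < c)
    (hcardA : c * #S ≤ #A) (hcardA' : c * #S ≤ #A') :
    c * ‖fmean A - fmean A'‖ ^ 2 ≤ 2 * fstdev S ^ 2 := by
  rcases S.eq_empty_or_nonempty with rfl | hS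
  · simp [subset_empty.1 hA, subset_empty.1 hA', sq_nonneg]
  have hpos : (0 : ℝ) < #A * #A' := by
    have : 0 < c * #S := by positivity
    exact mul_pos (by linarith) (by linarith)
  refine le_of_mul_le_mul_left ?_ hpos
  calc #A * #A' * (c * ‖fmean A - fmean A'‖ ^ 2)
      = c * (#A * #A' * ‖fmean A - fmean A'‖ ^ 2) := by ring
    _ ≤ c * ((#A + #A') * #S * fstdev S ^ 2) :=
      mul_le_mul_of_nonneg_left (card_mul_card_mul_norm_fmean_sub_sq_le hA hA' hdisj) hc.le
    _ = (c * #S * #A + c * #S * #A') * fstdev S ^ 2 := by ring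
    _ ≤ (#A' * #A + #A * #A') * fstdev S ^ 2 := by gcongr
    _ = #A * #A' * (2 * fstdev S ^ 2) := by ring

lemma sqrt_mul_norm_fmean_sub_le_of_inter_large {α : ℝ} (hα0 : 0 < α) (hα1 : α ≤ 1)
    {S B B' : Finset (EuclideanSpace ℝ (Fin d))} (hdisj : Disjoint B B')
    (hB : 0.96 * (#B : ℝ) ≤ #(B ∩ S)) (hB' : 0.96 * (#B' : ℝ) ≤ #(B' ∩ S))
    (hBS : 0.8832 * α * #S ≤ #(B ∩ S)) (hB'S : 0.8832 * α * #S ≤ #(B' ∩ S))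
    (hσ : 0.1 * fstdev S ≤ fstdev (B ∩ S)) (hσ' : 0.1 * fstdev S ≤ fstdev (B' ∩ S)) :
    √α * ‖fmean B - fmean B'‖ ≤ 12 * (fstdev B + fstdev B') := by
  set A := B ∩ S
  set A' := B' ∩ S
  have hσS : 0.0096 * fstdev S ^ 2 ≤ fstdev B ^ 2 := by
    have := mul_fstdev_sq_le_of_subset inter_subset_left hB
    nlinarith [fstdev_nonneg S]
  have hσS' : 0.0096 * fstdev S ^ 2 ≤ fstdev B' ^ 2 := by
    have := mul_fstdev_sq_le_of_subset inter_subset_left hB'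
    nlinarith [fstdev_nonneg S]
  have hdrift : ‖fmean A - fmean B‖ ≤ 1.03 * fstdev B := by
    have := mul_norm_fmean_sub_sq_le_of_subset inter_subset_left hB
    refine (sq_le_sq₀ (norm_nonneg _) (mul_nonneg (by norm_num) (fstdev_nonneg B))).1 ?_
    nlinarith
  have hdrift' : ‖fmean A' - fmean B'‖ ≤ 1.03 * fstdev B' := by
    have := mul_norm_fmean_sub_sq_le_of_subset inter_subset_left hB'
    refine (sq_le_sq₀ (norm_nonneg _) (mul_nonneg (by norm_num) (fstdev_nonneg B'))).1 ?_
    nlinarith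
  have hgap : √α * ‖fmean A - fmean A'‖ ≤ 10.9 * (fstdev B + fstdev B') := by
    have := mul_norm_fmean_sub_sq_le_of_disjoint inter_subset_right inter_subset_right
      (hdisj.mono inter_subset_left inter_subset_left) (by positivity) hBS hB'S
    have hσ_nonneg := add_nonneg (fstdev_nonneg B) (fstdev_nonneg B')
    refine (sq_le_sq₀ (by positivity) (mul_nonneg (by norm_num) hσ_nonneg)).1 ?_
    rw [mul_pow, Real.sq_sqrt hα0.le]
    -- `10.9² ≥ 1 / (0.8832 · 0.0096)`, and `2 σ_S² ≤ (σ_B² + σ_B'²) / 0.0096`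
    nlinarith [fstdev_nonneg B, fstdev_nonneg B']
  have htri : ‖fmean B - fmean B'‖ ≤
      ‖fmean A - fmean B‖ + ‖fmean A - fmean A'‖ + ‖fmean A' - fmean B'‖ := by
    rw [norm_sub_rev (fmean A)]
    calc ‖fmean B - fmean B'‖
        = ‖(fmean B - fmean A) + (fmean A - fmean A') + (fmean A' - fmean B')‖ := by
          congr 1; abel
      _ ≤ _ := norm_add₃_le
  have hsqrt : √α ≤ 1 := Real.sqrt_le_one.mpr hα1
  calc √α * ‖fmean B - fmean B'‖
      ≤ √α * ‖fmean A - fmean B‖ + √α * ‖fmean A - fmean A'‖ + √α * ‖fmean A' - fmean B'‖ := by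
        rw [← mul_add, ← mul_add]
        exact mul_le_mul_of_nonneg_left htri (Real.sqrt_nonneg α)
    _ ≤ ‖fmean A - fmean B‖ + √α * ‖fmean A - fmean A'‖ + ‖fmean A' - fmean B'‖ := by
        gcongr <;> exact mul_le_of_le_one_left (norm_nonneg _) hsqrt
    _ ≤ 12 * (fstdev B + fstdev B') := by
        linarith [fstdev_nonneg B, fstdev_nonneg B']

end

theorem nlsc_injective_assignment_general {d k m : ℕ} (T : Finset (EuclideanSpace ℝ (Fin d)))
    (α : ℝ) (hα0 : 0 < α) (hα1 : α ≤ 1)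
    (S : Fin k → Finset (EuclideanSpace ℝ (Fin d)))
    (hSsub : ∀ i, S i ⊆ T)
    (hNLSC : ∀ i : Fin k, ∀ S' ⊆ S i, 0.8 * α * (T.card : ℝ) ≤ (S'.card : ℝ) →
      0.1 * fstdev (S i) ≤ fstdev S')
    (B : Fin m → Finset (EuclideanSpace ℝ (Fin d)))
    (hBdisj : ∀ j j' : Fin m, j ≠ j' → Disjoint (B j) (B j'))
    (hBsize : ∀ j, 0.92 * α * (T.card : ℝ) ≤ ((B j).card : ℝ))
    (g : Fin m → Fin k)
    (hoverlap : ∀ j, 0.96 * ((B j).card : ℝ) ≤ (((B j) ∩ S (g j)).card : ℝ))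
    (hsep : ∀ j j' : Fin m, j ≠ j' →
      13 * (fstdev (B j) + fstdev (B j')) / Real.sqrt α < ‖fmean (B j) - fmean (B j')‖) :
    Function.Injective g := by
  intro j j' hg
  by_contra hne
  have hlarge : ∀ j, 0.8832 * α * #(S (g j)) ≤ #(B j ∩ S (g j)) ∧
      0.8 * α * #T ≤ #(B j ∩ S (g j)) := fun j => by
    have : (#(S (g j)) : ℝ) ≤ #T := by exact_mod_cast card_le_card (hSsub (g j))
    constructor <;> nlinarith [hBsize j, hoverlap j]
  have hclose := sqrt_mul_norm_fmean_sub_le_of_inter_large hα0 hα1 (hBdisj j j' hne)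
    (hoverlap j) (hg ▸ hoverlap j') (hlarge j).1 (hg ▸ (hlarge j').1)
    (hNLSC _ _ inter_subset_right (hlarge j).2) (hg ▸ hNLSC _ _ inter_subset_right (hlarge j').2)
  have hfar := (div_lt_iff₀' (Real.sqrt_pos.mpr hα0)).1 (hsep j j' hne)
  linarith [fstdev_nonneg (B j), fstdev_nonneg (B j')]

/-- Under the no-large-sub-cluster condition, at most one output set per
cluster. If the clusters `S_i` satisfy NLSC with parameter `α`, the sets `B_j` are disjoint,
large, each mostly contained in its cluster `S_{i(j)}`, and pairwise well separated, then the map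
`j ↦ i(j)` is injective. -/
theorem nlsc_injective_assignment {d k m : ℕ} (T : Finset (EuclideanSpace ℝ (Fin d)))
    (α : ℝ) (hα0 : 0 < α) (hα1 : α ≤ 1)
    (S : Fin k → Finset (EuclideanSpace ℝ (Fin d)))
    (hSsub : ∀ i, S i ⊆ T)
    (hSdisj : ∀ i i' : Fin k, i ≠ i' → Disjoint (S i) (S i'))
    (hNLSC : ∀ i : Fin k, ∀ S' ⊆ S i, 0.8 * α * (T.card : ℝ) ≤ (S'.card : ℝ) →
      0.1 * fstdev (S i) ≤ fstdev S')
    (B : Fin m → Finset (EuclideanSpace ℝ (Fin d)))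
    (hBsub : ∀ j, B j ⊆ T)
    (hBdisj : ∀ j j' : Fin m, j ≠ j' → Disjoint (B j) (B j'))
    (hBsize : ∀ j, 0.92 * α * (T.card : ℝ) ≤ ((B j).card : ℝ))
    (g : Fin m → Fin k)
    (hoverlap : ∀ j, 0.96 * ((B j).card : ℝ) ≤ (((B j) ∩ S (g j)).card : ℝ))
    (hsep : ∀ j j' : Fin m, j ≠ j' →
      13 * (fstdev (B j) + fstdev (B j')) / Real.sqrt α < ‖fmean (B j) - fmean (B j')‖) :
    Function.Injective g :=
  nlsc_injective_assignment_general T α hα0 hα1 S hSsub hNLSC B hBdisj hBsize g hoverlap hsep
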